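/- Suppose μ is a positive finite Borel measure on ∂T solving M(α)(1 − IM_p(b(α))) = Σ_{β≥α} M(β)^{p′} for all edges α, where M = I*μ and M_p = M^{p′−1}, and suppose additionally that IM_p ≡ 1 everywhere on supp(μ). Then μ is the p-equilibrium measure of supp(μ). -/

import Mathlib

/-!
At the root edge `IM_p(b(root)) = 0`, so the hypothesis gives `μ(∂T) = Σ_β M(β)^{p'}`, which is
also the `p`-energy of `M_p = M^{p'-1}`. Since `IM_p = 1` on `supp μ`, `M_p` is admissible and
`c_p(supp μ) ≤ Σ_β M(β)^{p'}`. Conversely, for admissible `f`, Fubini and Hölder give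
`μ(∂T) ≤ ∫ If dμ = Σ_β f(β) M(β) ≤ ‖f‖_p ‖M‖_{p'}`, which rearranges to `Σ_β M(β)^{p'} ≤ ‖f‖_p^p`.
-/

open scoped ENNReal
open MeasureTheory

/-- A locally finite rooted tree, given by its set of edges. The root edge has no parent,
every other edge has a parent, and every edge has finitely many children. -/
structure RTree where
  E : Type
  root : E
  parent : E → Option E
  parent_root : parent root = none
  parent_isSome : ∀ α, α ≠ root → (parent α).isSome
  level : E → ℕ
  level_root : level root = 0
  level_parent : ∀ α β, parent α = some β → level α = level β + 1
  locFin : ∀ α, {β | parent β = some α}.Finite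

namespace RTree

variable (T : RTree)

/-- `Le T α β` : the edge `α` is an ancestor of (or equal to) the edge `β`,
i.e. `α ≤ β` in the natural partial order on edges. -/
def Le (α β : T.E) : Prop :=
  Relation.ReflTransGen (fun x y => T.parent y = some x) α β

/-- The boundary of `T`: half-infinite geodesics starting at the root edge. -/
structure Boundary where
  seq : ℕ → T.E
  seq_zero : seq 0 = T.root
  seq_parent : ∀ n, T.parent (seq (n + 1)) = some (seq n)

/-- The boundary `∂T_α` of the tent over the edge `α`: boundary points whose
geodesic passes through `α`. -/
def tentB (α : T.E) : Set T.Boundary := {ζ | ∃ n, ζ.seq n = α}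

/-- The standard topology on the boundary, with the tent boundaries as a basis. -/
def ttop : TopologicalSpace T.Boundary :=
  TopologicalSpace.generateFrom {s | ∃ α, s = T.tentB α}

/-- The Borel σ-algebra on the boundary. -/
def tborel : MeasurableSpace T.Boundary := @borel _ T.ttop

/-- The set of edges of the tent `T_α`. -/
def tentE (α : T.E) : Set T.E := {β | T.Le α β}

/-- The relative potential `I_α f (ζ)`, summing `f` over the edges of the geodesic
from the root to `ζ` that lie in the tent `T_α`.  Taking `α` to be the root edge
gives the potential `If`. -/
noncomputable def relPot (α : T.E) (f : T.E → ℝ≥0∞) (ζ : T.Boundary) : ℝ≥0∞ :=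
  ∑' n, Set.indicator (T.tentE α) f (ζ.seq n)

/-- The relative `p`-energy `‖f‖_{ℓ^p(E(T_α))}^p`. -/
noncomputable def relEnergy (p : ℝ) (α : T.E) (f : T.E → ℝ≥0∞) : ℝ≥0∞ :=
  ∑' β, Set.indicator (T.tentE α) (fun γ => f γ ^ p) β

/-- The relative `p`-capacity `c_{p,α}(E)` of `E ⊆ ∂T`, with the tent `T_α`
as ambient tree. -/
noncomputable def relCap (p : ℝ) (α : T.E) (E : Set T.Boundary) : ℝ≥0∞ :=
  ⨅ f ∈ {f : T.E → ℝ≥0∞ | ∀ ζ ∈ E, 1 ≤ T.relPot α f ζ}, T.relEnergy p α f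

/-- The `p`-capacity of a subset of the boundary. -/
noncomputable def cap (p : ℝ) (E : Set T.Boundary) : ℝ≥0∞ := T.relCap p T.root E

end RTree

namespace RTree

variable (T : RTree)

/-- `IM_p(b(α))` : the sum of `M_p = M^{q-1}` over the strict ancestors of the
edge `α`, where `M` is the co-potential of `μ`. -/
noncomputable def belowSum (q : ℝ) (μ : @Measure T.Boundary T.tborel) (α : T.E) : ℝ≥0∞ :=
  ∑' β : T.E, Set.indicator {γ | T.Le γ α ∧ γ ≠ α}
    (fun γ => μ (T.tentB γ) ^ (q - 1)) β

/-- `μ` is the `p`-equilibrium measure of `E` relative to the tent rooted at `α`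
(here `q = p'` is the conjugate exponent of `p`): `μ` is supported on the closure
of `E`, its potential is at least `1` on `E` off a set of zero capacity
(admissibility of `M_p = M^{q-1}`), the energy of `μ` equals the capacity of `E`
(so `M_p` is the capacitary minimizer), and the total mass of `μ` equals the
capacity of `E`. -/
def IsEqMeasure (p q : ℝ) (α : T.E) (E : Set T.Boundary)
    (μ : @Measure T.Boundary T.tborel) : Prop :=
  μ ((@closure _ T.ttop E)ᶜ) = 0 ∧
  (∃ Z : Set T.Boundary, T.relCap p α Z = 0 ∧
    ∀ ζ ∈ E \ Z, 1 ≤ T.relPot α (fun β => μ (T.tentB β) ^ (q - 1)) ζ) ∧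
  T.relEnergy p α (fun β => μ (T.tentB β) ^ (q - 1)) = T.relCap p α E ∧
  μ Set.univ = T.relCap p α E

end RTree

namespace RTree

variable (T : RTree)

theorem eq_root_of_level_eq_zero {α : T.E} (h : T.level α = 0) : α = T.root := by
  by_contra hne
  obtain ⟨β, hβ⟩ := Option.isSome_iff_exists.mp (T.parent_isSome α hne)
  have := T.level_parent α β hβ
  omega

theorem root_le (α : T.E) : T.Le T.root α := by
  induction h : T.level α using Nat.strong_induction_on generalizing α with
  | _ n ih =>
    rcases eq_or_ne α T.root with rfl | hne
    · exact Relation.ReflTransGen.refl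
    · obtain ⟨β, hβ⟩ := Option.isSome_iff_exists.mp (T.parent_isSome α hne)
      have := T.level_parent α β hβ
      exact (ih (T.level β) (by omega) β rfl).tail hβ

theorem eq_root_of_le_root {γ : T.E} (h : T.Le γ T.root) : γ = T.root := by
  rcases Relation.ReflTransGen.cases_tail h with h | ⟨_, _, hc⟩
  · exact h.symm
  · simp [T.parent_root] at hc

@[simp]
theorem tentE_root : T.tentE T.root = Set.univ :=
  Set.eq_univ_of_forall T.root_le

@[simp]
theorem tentB_root : T.tentB T.root = Set.univ :=
  Set.eq_univ_of_forall fun ζ => ⟨0, ζ.seq_zero⟩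

theorem finite_setOf_level_eq (n : ℕ) : {α : T.E | T.level α = n}.Finite := by
  induction n with
  | zero => exact (Set.finite_singleton T.root).subset fun α => T.eq_root_of_level_eq_zero
  | succ n ih =>
    refine (ih.biUnion fun β _ => T.locFin β).subset fun α (hα : T.level α = n + 1) => ?_
    have hne : α ≠ T.root := by
      rintro rfl
      simp [T.level_root] at hα
    obtain ⟨β, hβ⟩ := Option.isSome_iff_exists.mp (T.parent_isSome α hne)
    have := T.level_parent α β hβ
    exact Set.mem_biUnion (show T.level β = n by omega) hβ

instance : Countable T.E := by
  have : ⋃ n, {α : T.E | T.level α = n} = Set.univ :=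
    Set.iUnion_eq_univ_iff.mpr fun α => ⟨_, rfl⟩
  rw [← Set.countable_univ_iff, ← this]
  exact Set.countable_iUnion fun n => (T.finite_setOf_level_eq n).countable

theorem Boundary.level_seq {T : RTree} (ζ : T.Boundary) (n : ℕ) : T.level (ζ.seq n) = n := by
  induction n with
  | zero => rw [ζ.seq_zero, T.level_root]
  | succ n ih => rw [T.level_parent _ _ (ζ.seq_parent n), ih]

theorem Boundary.seq_injective {T : RTree} (ζ : T.Boundary) : Function.Injective ζ.seq :=
  fun m n h => by rw [← ζ.level_seq m, ← ζ.level_seq n, h]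

theorem measurableSet_tentB (α : T.E) : MeasurableSet[T.tborel] (T.tentB α) :=
  MeasurableSpace.measurableSet_generateFrom
    (TopologicalSpace.isOpen_generateFrom_of_mem ⟨α, rfl⟩)

theorem relEnergy_root (p : ℝ) (f : T.E → ℝ≥0∞) :
    T.relEnergy p T.root f = ∑' β, f β ^ p := by
  simp [relEnergy]

theorem belowSum_root (q : ℝ) (μ : @Measure T.Boundary T.tborel) :
    T.belowSum q μ T.root = 0 := by
  have : {γ : T.E | T.Le γ T.root ∧ γ ≠ T.root} = ∅ :=
    Set.eq_empty_of_forall_notMem fun γ hγ => hγ.2 (T.eq_root_of_le_root hγ.1)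
  simp [belowSum, this]

theorem relCap_empty (p : ℝ) (hp : 0 < p) (α : T.E) : T.relCap p α ∅ = 0 :=
  nonpos_iff_eq_zero.mp <| iInf₂_le_of_le 0 (fun _ h => absurd h (Set.notMem_empty _)) <| by
    simp [relEnergy, ENNReal.zero_rpow_of_pos hp]

theorem relPot_root_eq_tsum_indicator (f : T.E → ℝ≥0∞) (ζ : T.Boundary) :
    T.relPot T.root f ζ = ∑' β, (T.tentB β).indicator (fun _ => f β) ζ := by
  have hsupp : Function.support (fun β => (T.tentB β).indicator (fun _ => f β) ζ) ⊆
      Set.range ζ.seq := fun β hβ => by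
    by_contra hζ
    exact hβ (Set.indicator_of_notMem hζ _)
  rw [← ζ.seq_injective.tsum_eq hsupp]
  simp only [relPot, tentE_root, Set.indicator_univ]
  exact tsum_congr fun n =>
    (Set.indicator_of_mem (show ζ ∈ T.tentB (ζ.seq n) from ⟨n, rfl⟩) fun _ => f (ζ.seq n)).symm

theorem lintegral_relPot_root (μ : @Measure T.Boundary T.tborel) (f : T.E → ℝ≥0∞) :
    ∫⁻ ζ, T.relPot T.root f ζ ∂μ = ∑' β, f β * μ (T.tentB β) := by
  simp_rw [T.relPot_root_eq_tsum_indicator]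
  rw [lintegral_tsum fun β => (measurable_const.indicator (T.measurableSet_tentB β)).aemeasurable]
  exact tsum_congr fun β => lintegral_indicator_const (T.measurableSet_tentB β) (f β)

end RTree

theorem ENNReal.tsum_mul_le_tsum_rpow_mul_tsum_rpow {ι : Type*} {p q : ℝ}
    (hpq : p.HolderConjugate q) (f g : ι → ℝ≥0∞) :
    ∑' i, f i * g i ≤ (∑' i, f i ^ p) ^ (1 / p) * (∑' i, g i ^ q) ^ (1 / q) := by
  let : MeasurableSpace ι := ⊤
  simpa [lintegral_count] using ENNReal.lintegral_mul_le_Lp_mul_Lq Measure.count hpq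
    (measurable_from_top (f := f)).aemeasurable (measurable_from_top (f := g)).aemeasurable

theorem ENNReal.le_of_le_rpow_mul_rpow {p q : ℝ} (hpq : p.HolderConjugate q) {a x : ℝ≥0∞}
    (ha : a ≠ ⊤) (h : a ≤ x ^ (1 / p) * a ^ (1 / q)) : a ≤ x := by
  rcases eq_or_ne a 0 with rfl | ha₀
  · exact zero_le
  have hsplit : a ^ (1 / p) * a ^ (1 / q) = a := by
    rw [← ENNReal.rpow_add _ _ ha₀ ha, hpq.one_div_add_one_div, one_div_one, ENNReal.rpow_one]
  have hroot : a ^ (1 / p) ≤ x ^ (1 / p) := by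
    rwa [← ENNReal.mul_le_mul_iff_left (ENNReal.rpow_pos (pos_iff_ne_zero.mpr ha₀) ha).ne'
      (ENNReal.rpow_ne_top_of_nonneg (one_div_pos.mpr hpq.symm.pos).le ha), hsplit]
  exact (ENNReal.rpow_le_rpow_iff (one_div_pos.mpr hpq.pos)).mp hroot

namespace RTree

variable (T : RTree)

/-- The support of `μ`, read off the tent basis. -/
def supp (μ : @Measure T.Boundary T.tborel) : Set T.Boundary :=
  {ζ | ∀ α, ζ ∈ T.tentB α → μ (T.tentB α) ≠ 0}

theorem compl_supp (μ : @Measure T.Boundary T.tborel) :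
    (T.supp μ)ᶜ = ⋃ α : {α : T.E // μ (T.tentB α) = 0}, T.tentB α := by
  ext ζ
  simp [supp, and_comm]

theorem measurableSet_supp (μ : @Measure T.Boundary T.tborel) :
    MeasurableSet[T.tborel] (T.supp μ) := by
  rw [← compl_compl (T.supp μ), compl_supp]
  exact (MeasurableSet.iUnion fun α : {α // μ (T.tentB α) = 0} => T.measurableSet_tentB α).compl

theorem measure_compl_supp (μ : @Measure T.Boundary T.tborel) : μ (T.supp μ)ᶜ = 0 := by
  rw [compl_supp]
  exact measure_iUnion_null Subtype.prop

theorem relEnergy_root_rpow_sub_one {p q : ℝ} (hpq : p.HolderConjugate q) (g : T.E → ℝ≥0∞) :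
    T.relEnergy p T.root (fun β => g β ^ (q - 1)) = ∑' β, g β ^ q := by
  simp only [relEnergy_root, ← ENNReal.rpow_mul, hpq.symm.sub_one_mul_conj]

theorem measure_le_relEnergy_rpow_mul {p q : ℝ} (hpq : p.HolderConjugate q)
    (μ : @Measure T.Boundary T.tborel) {E : Set T.Boundary} (hE : MeasurableSet[T.tborel] E)
    {f : T.E → ℝ≥0∞} (hf : ∀ ζ ∈ E, 1 ≤ T.relPot T.root f ζ) :
    μ E ≤ T.relEnergy p T.root f ^ (1 / p) * (∑' β, μ (T.tentB β) ^ q) ^ (1 / q) :=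
  let := T.tborel
  calc μ E = ∫⁻ ζ, E.indicator 1 ζ ∂μ := (lintegral_indicator_one hE).symm
    _ ≤ ∫⁻ ζ, T.relPot T.root f ζ ∂μ :=
      lintegral_mono fun ζ => Set.indicator_le hf ζ
    _ = ∑' β, f β * μ (T.tentB β) := T.lintegral_relPot_root μ f
    _ ≤ _ := by
      rw [relEnergy_root]
      exact ENNReal.tsum_mul_le_tsum_rpow_mul_tsum_rpow hpq _ _

theorem tsum_rpow_le_relCap_root {p q : ℝ} (hpq : p.HolderConjugate q)
    (μ : @Measure T.Boundary T.tborel) {E : Set T.Boundary} (hE : MeasurableSet[T.tborel] E)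
    (hfin : ∑' β, μ (T.tentB β) ^ q ≠ ⊤) (hmass : μ E = ∑' β, μ (T.tentB β) ^ q) :
    ∑' β, μ (T.tentB β) ^ q ≤ T.relCap p T.root E :=
  le_iInf₂ fun _ hf => ENNReal.le_of_le_rpow_mul_rpow hpq hfin <|
    hmass ▸ T.measure_le_relEnergy_rpow_mul hpq μ hE hf

end RTree

open RTree

/-- If a finite positive Borel measure `μ` on `∂T` solves
`M(α)(1 − IM_p(b(α))) = Σ_{β≥α} M(β)^{p′}` for all edges `α`, where `M = I*μ`,
and moreover `IM_p ≡ 1` everywhere on `supp(μ)` (described via the tent basis: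
`ζ ∈ supp μ` iff every tent boundary containing `ζ` has positive measure), then
`μ` is the `p`-equilibrium measure of `supp(μ)`. -/
theorem stmt16 (T : RTree) (p q : ℝ) (hp : 1 < p) (hpq : 1 / p + 1 / q = 1)
    (μ : @Measure T.Boundary T.tborel) (hfin : @IsFiniteMeasure _ _ μ)
    (heq : ∀ α : T.E, μ (T.tentB α) * (1 - T.belowSum q μ α) =
      ∑' β : T.E, Set.indicator (T.tentE α) (fun γ => μ (T.tentB γ) ^ q) β)
    (hpot : ∀ ζ ∈ {ζ : T.Boundary | ∀ α : T.E, ζ ∈ T.tentB α → μ (T.tentB α) ≠ 0},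
      T.relPot T.root (fun β => μ (T.tentB β) ^ (q - 1)) ζ = 1) :
    T.IsEqMeasure p q T.root
      {ζ : T.Boundary | ∀ α : T.E, ζ ∈ T.tentB α → μ (T.tentB α) ≠ 0} μ := by
  let := T.ttop
  let := T.tborel
  have hpq' : p.HolderConjugate q :=
    Real.holderConjugate_iff.mpr ⟨hp, by simpa only [one_div] using hpq⟩
  have hmass : μ Set.univ = ∑' β, μ (T.tentB β) ^ q := by
    simpa [T.belowSum_root] using heq T.root
  have hfinite : ∑' β, μ (T.tentB β) ^ q ≠ ⊤ := hmass ▸ measure_ne_top μ _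
  have henergy := T.relEnergy_root_rpow_sub_one hpq' fun β => μ (T.tentB β)
  have hcap : T.relCap p T.root (T.supp μ) = ∑' β, μ (T.tentB β) ^ q := by
    refine le_antisymm (henergy ▸ iInf₂_le _ fun ζ hζ => (hpot ζ hζ).ge) ?_
    refine T.tsum_rpow_le_relCap_root hpq' μ (T.measurableSet_supp μ) hfinite ?_
    rw [measure_congr (ae_eq_univ.mpr (T.measure_compl_supp μ)), hmass]
  exact ⟨measure_mono_null (Set.compl_subset_compl.mpr subset_closure) (T.measure_compl_supp μ),
    ⟨∅, T.relCap_empty p hpq'.pos T.root, fun ζ hζ => (hpot ζ hζ.1).ge⟩,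
    henergy.trans hcap.symm, hmass.trans hcap.symm⟩
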